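/- For all nonnegative integers m, n and complex z₁, z₂, q: q^n z₁ h_{m,n}(z₁, z₂ | q) = h_{m+1,n}(z₁, z₂ | q) + (1 - q^n) h_{m,n-1}(z₁, z₂ | q), where the term with n-1 is interpreted as 0 if n = 0. -/

import Mathlib

open Finset Filter

noncomputable def qPoch (a q : ℂ) (n : ℕ) : ℂ :=
  ∏ j ∈ Finset.range n, (1 - a * q ^ j)

noncomputable def qbinom (q : ℂ) : ℕ → ℕ → ℂ
  | _, 0 => 1
  | 0, _ + 1 => 0
  | m + 1, k + 1 => qbinom q m k + q ^ (k + 1) * qbinom q m (k + 1)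

/-- The first q-analogue of the 2D Hermite polynomials. -/
noncomputable def H2D (q z1 z2 : ℂ) (m n : ℕ) : ℂ :=
  ∑ k ∈ Finset.range (min m n + 1),
    qbinom q m k * qbinom q n k * (-1) ^ k * q ^ (k.choose 2) * qPoch q q k *
      z1 ^ (m - k) * z2 ^ (n - k)

/-- The second q-analogue of the 2D Hermite polynomials. -/
noncomputable def h2D (q z1 z2 : ℂ) (m n : ℕ) : ℂ :=
  ∑ j ∈ Finset.range (min m n + 1),
    qbinom q m j * qbinom q n j * q ^ ((m - j) * (n - j)) * (-1) ^ j * qPoch q q j *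
      z1 ^ (m - j) * z2 ^ (n - j)

/-- The q-2D ultraspherical (q-disk / q-Zernike) polynomials. -/
noncomputable def p2D (q b z1 z2 : ℂ) (m n : ℕ) : ℂ :=
  ∑ k ∈ Finset.range (min m n + 1),
    qbinom q m k * qbinom q n k * (-1) ^ k * q ^ (k.choose 2) * qPoch q q k *
      qPoch (b * q) q (m + n - k) * z1 ^ (m - k) * z2 ^ (n - k)

/-- The infinite q-Pochhammer product (a;q)_∞. -/
noncomputable def qPochInf (a q : ℂ) : ℂ :=
  ∏' j : ℕ, (1 - a * q ^ j)

/-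
Split the Pascal rule `[m+1, j+1] = [m, j] + q^(j+1) [m, j+1]` inside each term of `h_{m+1,n}`.
The second part is exactly the corresponding term of `q^n z₁ h_{m,n}`, and the absorption
identity `(1 - q^(j+1)) [n, j+1] = (1 - q^n) [n-1, j]` turns the first part, shifted by one
index, into `-(1 - q^n)` times a term of `h_{m,n-1}`.
-/

section QBinom

variable (q : ℂ)

@[simp]
lemma qbinom_zero_right (n : ℕ) : qbinom q n 0 = 1 := by
  cases n <;> rfl

lemma qbinom_succ_succ (n k : ℕ) :
    qbinom q (n + 1) (k + 1) = qbinom q n k + q ^ (k + 1) * qbinom q n (k + 1) := rfl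

lemma qbinom_eq_zero_of_lt {n k : ℕ} (h : n < k) : qbinom q n k = 0 := by
  induction n generalizing k with
  | zero => obtain ⟨k, rfl⟩ := Nat.exists_eq_succ_of_ne_zero (by omega : k ≠ 0); rfl
  | succ n ih =>
    obtain ⟨k, rfl⟩ := Nat.exists_eq_succ_of_ne_zero (by omega : k ≠ 0)
    rw [qbinom_succ_succ, ih (by omega), ih (by omega), mul_zero, add_zero]

lemma one_sub_mul_qbinom_one (n : ℕ) : (1 - q) * qbinom q n 1 = 1 - q ^ n := by
  induction n with
  | zero => simp [qbinom]
  | succ n ih =>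
    rw [qbinom_succ_succ, qbinom_zero_right]
    linear_combination q * ih

-- For `n ≤ k` both sides vanish, the right one because `n - k` truncates to `0`.
lemma one_sub_pow_mul_qbinom_succ (n k : ℕ) :
    (1 - q ^ (k + 1)) * qbinom q n (k + 1) = (1 - q ^ (n - k)) * qbinom q n k := by
  induction n generalizing k with
  | zero => rw [qbinom_eq_zero_of_lt q (by omega)]; simp
  | succ n ih =>
    cases k with
    | zero => simpa using one_sub_mul_qbinom_one q (n + 1)
    | succ k =>
      rcases lt_or_ge k n with hk | hk
      · obtain ⟨l, rfl⟩ := Nat.exists_eq_add_of_lt hk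
        have ih₀ := ih k
        have ih₁ := ih (k + 1)
        simp only [show k + l + 1 - k = l + 1 by omega, show k + l + 1 - (k + 1) = l by omega]
          at ih₀ ih₁
        rw [show k + l + 1 + 1 - (k + 1) = l + 1 by omega, qbinom_succ_succ q (k + l + 1) (k + 1),
          qbinom_succ_succ q (k + l + 1) k]
        linear_combination ih₀ + q ^ (k + 2) * ih₁
      · rw [qbinom_eq_zero_of_lt q (by omega : n + 1 < k + 1 + 1), Nat.sub_eq_zero_of_le (by omega)]
        ring

lemma one_sub_pow_mul_qbinom_succ_succ (n k : ℕ) :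
    (1 - q ^ (k + 1)) * qbinom q (n + 1) (k + 1) = (1 - q ^ (n + 1)) * qbinom q n k := by
  rcases le_or_gt k n with hk | hk
  · obtain ⟨l, rfl⟩ := Nat.exists_eq_add_of_le hk
    have h := one_sub_pow_mul_qbinom_succ q (k + l) k
    rw [Nat.add_sub_cancel_left] at h
    rw [qbinom_succ_succ]
    linear_combination q ^ (k + 1) * h
  · rw [qbinom_eq_zero_of_lt q (by omega), qbinom_eq_zero_of_lt q hk]
    ring

end QBinom

lemma qPoch_succ (a q : ℂ) (k : ℕ) : qPoch a q (k + 1) = qPoch a q k * (1 - a * q ^ k) :=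
  Finset.prod_range_succ _ _

section h2D

variable (q z1 z2 : ℂ)

noncomputable def h2DTerm (m n j : ℕ) : ℂ :=
  qbinom q m j * qbinom q n j * q ^ ((m - j) * (n - j)) * (-1) ^ j * qPoch q q j *
    z1 ^ (m - j) * z2 ^ (n - j)

lemma h2DTerm_eq_zero {m n j : ℕ} (h : min m n < j) : h2DTerm q z1 z2 m n j = 0 := by
  rcases min_lt_iff.mp h with h | h <;> simp [h2DTerm, qbinom_eq_zero_of_lt q h]

lemma h2D_eq_sum_range {m n N : ℕ} (hN : min m n < N) :
    h2D q z1 z2 m n = ∑ j ∈ range N, h2DTerm q z1 z2 m n j :=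
  Finset.sum_subset (range_subset_range.mpr hN) fun _ _ hj =>
    h2DTerm_eq_zero q z1 z2 (by rw [mem_range, not_lt] at hj; omega)

lemma h2DTerm_succ_zero (m n : ℕ) :
    h2DTerm q z1 z2 (m + 1) n 0 = q ^ n * z1 * h2DTerm q z1 z2 m n 0 := by
  simp only [h2DTerm, Nat.sub_zero, qbinom_zero_right, qPoch, range_zero, prod_empty]
  ring

lemma h2DTerm_succ_succ (m n j : ℕ) :
    h2DTerm q z1 z2 (m + 1) n (j + 1) =
      q ^ n * z1 * h2DTerm q z1 z2 m n (j + 1) - (1 - q ^ n) * h2DTerm q z1 z2 m (n - 1) j := by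
  cases n with
  | zero => simp [h2DTerm, qbinom_eq_zero_of_lt]
  | succ n =>
    have shift : q ^ (j + 1) * qbinom q m (j + 1) * qbinom q (n + 1) (j + 1) *
        q ^ ((m - j) * (n - j)) * z1 ^ (m - j) =
        q ^ (n + 1) * z1 * (qbinom q m (j + 1) * qbinom q (n + 1) (j + 1) *
          q ^ ((m - (j + 1)) * (n - j)) * z1 ^ (m - (j + 1))) := by
      rcases lt_or_ge m (j + 1) with hm | hm
      · simp [qbinom_eq_zero_of_lt q hm]
      rcases lt_or_ge n j with hn | hn
      · simp [qbinom_eq_zero_of_lt q (by omega : n + 1 < j + 1)]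
      obtain ⟨a, rfl⟩ := Nat.exists_eq_add_of_le hm
      obtain ⟨b, rfl⟩ := Nat.exists_eq_add_of_le hn
      simp only [show j + 1 + a - j = a + 1 by omega, Nat.add_sub_cancel_left]
      ring
    have absorb := one_sub_pow_mul_qbinom_succ_succ q n j
    simp only [h2DTerm, Nat.add_sub_add_right, Nat.add_sub_cancel, qbinom_succ_succ q m j,
      qPoch_succ]
    linear_combination ((-1) ^ (j + 1) * qPoch q q j * (1 - q * q ^ j) * z2 ^ (n - j)) * shift
      - (-1) ^ j * qbinom q m j * q ^ ((m - j) * (n - j)) * qPoch q q j * z1 ^ (m - j)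
        * z2 ^ (n - j) * absorb

end h2D

theorem stmt10 (m n : ℕ) (z1 z2 q : ℂ) :
    q ^ n * z1 * h2D q z1 z2 m n =
      h2D q z1 z2 (m + 1) n + (1 - q ^ n) * h2D q z1 z2 m (n - 1) := by
  rw [h2D_eq_sum_range q z1 z2 (N := m + 2) (by omega),
    h2D_eq_sum_range q z1 z2 (N := m + 2) (by omega),
    h2D_eq_sum_range q z1 z2 (N := m + 1) (m := m) (n := n - 1) (by omega),
    sum_range_succ' _ (m + 1), sum_range_succ' _ (m + 1)]
  simp only [h2DTerm_succ_zero, h2DTerm_succ_succ, sum_sub_distrib, ← mul_sum]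
  ring
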